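/- Let κ > 1, μ ≥ 1, A > 0, and let Λ be a real-valued symbol in S^{1/κ}_μ(ℝ^{2n};A). Set ρ₀ := sup over (α,β) ∈ ℕ₀^{2n} and (x,ξ) ∈ ℝ^{2n} of A^{−|α+β|}(α!β!)^{−μ}⟨ξ⟩^{−1/κ+|α|}|∂_ξ^α ∂_x^β Λ(x,ξ)|. Then there exists a constant A₁ > 0, independent of α and β, such that |∂_ξ^α ∂_x^β e^{±Λ(x,ξ)}| ≤ A₁^{|α+β|} ⟨ξ⟩^{−|α|} (α!β!)^μ e^{2ρ₀⟨ξ⟩^{1/κ}} for all α, β ∈ ℕ₀ⁿ and x, ξ ∈ ℝⁿ. -/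

import Mathlib

/-!
Statement 19 (estimate (2.3) of the paper): if `Λ ∈ S^{1/κ}_μ(ℝ^{2n};A)` is
real-valued and `ρ₀` is the corresponding sup, then
`|∂_ξ^α ∂_x^β e^{±Λ}| ≤ A₁^{|α+β|} ⟨ξ⟩^{-|α|} (α!β!)^μ e^{2ρ₀⟨ξ⟩^{1/κ}}`.
-/

open MeasureTheory Real Set
open scoped RealInnerProductSpace

noncomputable section

/-- Euclidean space `ℝⁿ`. -/
abbrev En (n : ℕ) := EuclideanSpace ℝ (Fin n)

/-- Japanese bracket `⟨ξ⟩ = (1+|ξ|²)^{1/2}` on `ℝⁿ`. -/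
def jbn {n : ℕ} (ξ : En n) : ℝ := Real.sqrt (1 + ‖ξ‖ ^ 2)

variable {n : ℕ} {F : Type*} [NormedAddCommGroup F] [NormedSpace ℝ F]

/-- Partial derivative in the `i`-th coordinate direction. -/
def pd (i : Fin n) (f : En n → F) : En n → F :=
  fun x => fderiv ℝ f x (EuclideanSpace.single i 1)

/-- Iterated partial derivative `∂_i^k`. -/
def pdPow (i : Fin n) : ℕ → (En n → F) → En n → F
  | 0, f => f
  | k + 1, f => pd i (pdPow i k f)

/-- Multi-index derivative `∂^α = ∂_1^{α₁} ⋯ ∂_n^{αₙ}`. -/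
def mderiv (α : Fin n → ℕ) (f : En n → F) : En n → F :=
  (List.finRange n).foldr (fun i g => pdPow i (α i) g) f

/-- Length `|α|` of a multi-index. -/
def mdeg {n : ℕ} (α : Fin n → ℕ) : ℕ := ∑ i, α i

/-- Factorial `α!` of a multi-index. -/
def mfact {n : ℕ} (α : Fin n → ℕ) : ℕ := ∏ i, (α i).factorial

/-- Symbol derivative `∂_ξ^α ∂_x^β p(x,ξ)`. -/
def symbD (α β : Fin n → ℕ) (p : En n → En n → F) (x ξ : En n) : F :=
  mderiv β (fun x' => mderiv α (p x') ξ) x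

/-- Fourier transform `û(ξ) = ∫ e^{-i x·ξ} u(x) dx`. -/
def FTn {n : ℕ} (u : En n → ℂ) (ξ : En n) : ℂ :=
  ∫ x : En n, Complex.exp (-(Complex.I * (⟪x, ξ⟫ : ℂ))) * u x

/-- The pseudodifferential operator `p(x,D)u(x) = (2π)^{-n} ∫ e^{i x·ξ} p(x,ξ) û(ξ) dξ`. -/
def opSym {n : ℕ} (p : En n → En n → ℂ) (u : En n → ℂ) (x : En n) : ℂ :=
  ((((2 * π : ℝ) ^ n)⁻¹ : ℝ) : ℂ) *
    ∫ ξ : En n, Complex.exp (Complex.I * (⟪x, ξ⟫ : ℂ)) * p x ξ * FTn u ξ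

/-- The reverse operator `^R{p(x,D)}u(x) = Os-∬ e^{i ξ·(x-y)} p(y,ξ) u(y) dy (2π)^{-n}dξ`,
realized as an iterated integral. -/
def opSymRev {n : ℕ} (p : En n → En n → ℂ) (u : En n → ℂ) (x : En n) : ℂ :=
  ((((2 * π : ℝ) ^ n)⁻¹ : ℝ) : ℂ) *
    ∫ ξ : En n, ∫ y : En n, Complex.exp (Complex.I * (⟪x - y, ξ⟫ : ℂ)) * p y ξ * u y

/-- The weighted (Fourier side) function defining `H^m_{ρ;θ}(ℝⁿ)`. -/
def hgsWeightN {n : ℕ} (m ρ θ : ℝ) (u : En n → ℂ) (ξ : En n) : ℂ :=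
  ((jbn ξ ^ m * Real.exp (ρ * jbn ξ ^ (1 / θ)) : ℝ) : ℂ) * FTn u ξ

/-- Membership in the Gevrey–Sobolev space `H^m_{ρ;θ}(ℝⁿ)`. -/
def MemHGSN {n : ℕ} (m ρ θ : ℝ) (u : En n → ℂ) : Prop :=
  MemLp (hgsWeightN m ρ θ u) 2 volume

/-- The norm of `H^m_{ρ;θ}(ℝⁿ)`. -/
def hgsNormN {n : ℕ} (m ρ θ : ℝ) (u : En n → ℂ) : ℝ :=
  (eLpNorm (hgsWeightN m ρ θ u) 2 volume).toReal


/-! ### Auxiliary machinery -/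

namespace S19

abbrev E2 (n : ℕ) := En n × En n
abbrev Dir (n : ℕ) := Sum (Fin n) (Fin n)
abbrev blk (n : ℕ) := ((Fin n → ℕ) × (Fin n → ℕ))

variable {n : ℕ}

def dvec : Dir n → E2 n
  | Sum.inl i => (EuclideanSpace.single i 1, 0)
  | Sum.inr i => (0, EuclideanSpace.single i 1)

def DL : List (Dir n) → (E2 n → ℝ) → E2 n → ℝ
  | [], g => g
  | d :: L, g => fun p => fderiv ℝ (DL L g) p (dvec d)

lemma one_le_inf : ((⊤ : ℕ∞) : WithTop ℕ∞) ≠ 0 := by simp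

lemma DL_append (L₁ L₂ : List (Dir n)) (g : E2 n → ℝ) :
    DL (L₁ ++ L₂) g = DL L₁ (DL L₂ g) := by
  induction L₁ with
  | nil => rfl
  | cons d L ih => simp [DL, ih]

lemma DL_smooth {g : E2 n → ℝ} (hg : ContDiff ℝ (⊤ : ℕ∞) g) (L : List (Dir n)) :
    ContDiff ℝ (⊤ : ℕ∞) (DL L g) := by
  induction L with
  | nil => exact hg
  | cons d L ih => exact (ContDiff.fderiv_right ih le_rfl).clm_apply contDiff_const

lemma DL_diff {g : E2 n → ℝ} (hg : ContDiff ℝ (⊤ : ℕ∞) g) (L : List (Dir n)) :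
    Differentiable ℝ (DL L g) := (DL_smooth hg L).differentiable one_le_inf

lemma DL_add {f g : E2 n → ℝ} (hf : ContDiff ℝ (⊤ : ℕ∞) f) (hg : ContDiff ℝ (⊤ : ℕ∞) g)
    (L : List (Dir n)) :
    DL L (fun p => f p + g p) = fun p => DL L f p + DL L g p := by
  induction L with
  | nil => rfl
  | cons d L ih =>
    funext p
    show fderiv ℝ (DL L fun p => f p + g p) p (dvec d) = _
    rw [ih]
    rw [fderiv_fun_add (DL_diff hf L _) (DL_diff hg L _)]
    rfl

lemma DL_const_mul {f : E2 n → ℝ} (hf : ContDiff ℝ (⊤ : ℕ∞) f) (c : ℝ) (L : List (Dir n)) :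
    DL L (fun p => c * f p) = fun p => c * DL L f p := by
  induction L with
  | nil => rfl
  | cons d L ih =>
    funext p
    show fderiv ℝ (DL L fun p => c * f p) p (dvec d) = _
    rw [ih, fderiv_const_mul (DL_diff hf L _)]
    rfl

lemma DL_zero (L : List (Dir n)) : DL L (fun _ => (0:ℝ)) = fun _ => 0 := by
  induction L with
  | nil => rfl
  | cons d L ih =>
    funext p
    show fderiv ℝ (DL L fun _ => (0:ℝ)) p (dvec d) = _
    rw [ih]
    simp

lemma contDiff_listSum {α' : Type*} (F : α' → E2 n → ℝ) :
    ∀ (fs : List α'), (∀ f ∈ fs, ContDiff ℝ (⊤ : ℕ∞) (F f)) →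
      ContDiff ℝ (⊤ : ℕ∞) (fun p => (fs.map (fun f => F f p)).sum)
  | [], _ => by simpa using contDiff_const
  | f :: fs, h => by
    have h1 : ContDiff ℝ (⊤ : ℕ∞) (F f) := h f (by simp)
    have h2 := contDiff_listSum F fs (fun f hf => h f (by simp [hf]))
    simpa using h1.add h2

lemma DL_listSum {α' : Type*} (F : α' → E2 n → ℝ) (L : List (Dir n)) :
    ∀ (fs : List α'), (∀ f ∈ fs, ContDiff ℝ (⊤ : ℕ∞) (F f)) →
      DL L (fun p => (fs.map (fun f => F f p)).sum) =
        fun p => (fs.map (fun f => DL L (F f) p)).sum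
  | [], _ => by simpa using DL_zero L
  | f :: fs, h => by
    have h1 : ContDiff ℝ (⊤ : ℕ∞) (F f) := h f (by simp)
    have h2 : ∀ f ∈ fs, ContDiff ℝ (⊤ : ℕ∞) (F f) := fun f hf => h f (by simp [hf])
    have hsum := contDiff_listSum F fs h2
    have ih := DL_listSum F L fs h2
    funext p
    simp only [List.map_cons, List.sum_cons]
    rw [show (fun p => F f p + (fs.map (fun f => F f p)).sum)
        = (fun p => F f p + (fun q => (fs.map (fun f => F f q)).sum) p) from rfl]
    rw [DL_add h1 hsum L, ih]

lemma pdv_swap {h : E2 n → ℝ} (hh : ContDiff ℝ (⊤ : ℕ∞) h) (v w : E2 n) (p : E2 n) :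
    fderiv ℝ (fun q => fderiv ℝ h q v) p w = fderiv ℝ (fun q => fderiv ℝ h q w) p v := by
  have hd : Differentiable ℝ h := hh.differentiable one_le_inf
  have hF : ContDiff ℝ (⊤ : ℕ∞) (fderiv ℝ h) := ContDiff.fderiv_right hh le_rfl
  have hFd : Differentiable ℝ (fderiv ℝ h) := hF.differentiable one_le_inf
  have key : ∀ u : E2 n, fderiv ℝ (fun q => fderiv ℝ h q u) p =
      (fderiv ℝ (fderiv ℝ h) p).flip u := by
    intro u
    have := fderiv_clm_apply (𝕜 := ℝ) (c := fderiv ℝ h) (u := fun _ => u)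
      (hFd p) (differentiableAt_const u)
    rw [this]
    simp
  rw [key w, key v]
  simp only [ContinuousLinearMap.flip_apply]
  exact second_derivative_symmetric (fun q => (hd q).hasFDerivAt)
    ((hFd p).hasFDerivAt) w v

lemma DL_perm {g : E2 n → ℝ} (hg : ContDiff ℝ (⊤ : ℕ∞) g) {L₁ L₂ : List (Dir n)}
    (hp : L₁.Perm L₂) : DL L₁ g = DL L₂ g := by
  induction hp with
  | nil => rfl
  | cons d _ ih => show DL (d :: _) g = DL (d :: _) g; simp [DL, ih]
  | swap u v L =>
    show DL (v :: u :: L) g = DL (u :: v :: L) g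
    funext p
    exact pdv_swap (DL_smooth hg L) (dvec u) (dvec v) p
  | trans _ _ ih1 ih2 => rw [ih1, ih2]

/-! ### canonical derivative lists -/

def Ξl (α : Fin n → ℕ) : List (Dir n) :=
  (List.finRange n).flatMap fun i => List.replicate (α i) (Sum.inr i)
def Xl (β : Fin n → ℕ) : List (Dir n) :=
  (List.finRange n).flatMap fun i => List.replicate (β i) (Sum.inl i)
def canon (α β : Fin n → ℕ) : List (Dir n) := Xl β ++ Ξl α

lemma slice_right {h : E2 n → ℝ} (hh : ContDiff ℝ (⊤ : ℕ∞) h) (x : En n) (i : Fin n) :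
    pd i (fun ξ' => h (x, ξ')) = fun ξ' => fderiv ℝ h (x, ξ') (dvec (Sum.inr i)) := by
  funext ξ
  have hc : HasFDerivAt (fun ξ' : En n => h (x, ξ'))
      ((fderiv ℝ h (x, ξ)).comp (ContinuousLinearMap.inr ℝ (En n) (En n))) ξ :=
    ((hh.differentiable one_le_inf (x, ξ)).hasFDerivAt).comp ξ (hasFDerivAt_prodMk_right x ξ)
  show fderiv ℝ (fun ξ' => h (x, ξ')) ξ (EuclideanSpace.single i 1) = _
  rw [hc.fderiv]
  rfl

lemma slice_left {h : E2 n → ℝ} (hh : ContDiff ℝ (⊤ : ℕ∞) h) (ξ : En n) (i : Fin n) :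
    pd i (fun x' => h (x', ξ)) = fun x' => fderiv ℝ h (x', ξ) (dvec (Sum.inl i)) := by
  funext x
  have hc : HasFDerivAt (fun x' : En n => h (x', ξ))
      ((fderiv ℝ h (x, ξ)).comp (ContinuousLinearMap.inl ℝ (En n) (En n))) x :=
    ((hh.differentiable one_le_inf (x, ξ)).hasFDerivAt).comp x (hasFDerivAt_prodMk_left x ξ)
  show fderiv ℝ (fun x' => h (x', ξ)) x (EuclideanSpace.single i 1) = _
  rw [hc.fderiv]
  rfl

lemma pdPow_slice_right {h : E2 n → ℝ} (hh : ContDiff ℝ (⊤ : ℕ∞) h) (x : En n) (i : Fin n)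
    (k : ℕ) :
    pdPow i k (fun ξ' => h (x, ξ')) = fun ξ' => DL (List.replicate k (Sum.inr i)) h (x, ξ') := by
  induction k with
  | zero => rfl
  | succ k ih =>
    show pd i (pdPow i k _) = _
    rw [ih, slice_right (DL_smooth hh _) x i]
    rfl

lemma pdPow_slice_left {h : E2 n → ℝ} (hh : ContDiff ℝ (⊤ : ℕ∞) h) (ξ : En n) (i : Fin n)
    (k : ℕ) :
    pdPow i k (fun x' => h (x', ξ)) = fun x' => DL (List.replicate k (Sum.inl i)) h (x', ξ) := by
  induction k with
  | zero => rfl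
  | succ k ih =>
    show pd i (pdPow i k _) = _
    rw [ih, slice_left (DL_smooth hh _) ξ i]
    rfl

lemma foldr_slice_right {h : E2 n → ℝ} (hh : ContDiff ℝ (⊤ : ℕ∞) h) (α : Fin n → ℕ)
    (x : En n) (J : List (Fin n)) :
    J.foldr (fun i g => pdPow i (α i) g) (fun ξ' => h (x, ξ')) =
      fun ξ' => DL (J.flatMap fun i => List.replicate (α i) (Sum.inr i)) h (x, ξ') := by
  induction J with
  | nil => rfl
  | cons j J ih =>
    show pdPow j (α j) (J.foldr _ _) = _
    rw [ih, pdPow_slice_right (DL_smooth hh _) x j (α j)]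
    rw [List.flatMap_cons, DL_append]

lemma foldr_slice_left {h : E2 n → ℝ} (hh : ContDiff ℝ (⊤ : ℕ∞) h) (β : Fin n → ℕ)
    (ξ : En n) (J : List (Fin n)) :
    J.foldr (fun i g => pdPow i (β i) g) (fun x' => h (x', ξ)) =
      fun x' => DL (J.flatMap fun i => List.replicate (β i) (Sum.inl i)) h (x', ξ) := by
  induction J with
  | nil => rfl
  | cons j J ih =>
    show pdPow j (β j) (J.foldr _ _) = _
    rw [ih, pdPow_slice_left (DL_smooth hh _) ξ j (β j)]
    rw [List.flatMap_cons, DL_append]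

lemma bridge {h : E2 n → ℝ} (hh : ContDiff ℝ (⊤ : ℕ∞) h) (α β : Fin n → ℕ) (x ξ : En n) :
    symbD α β (fun a b => h (a, b)) x ξ = DL (canon α β) h (x, ξ) := by
  have inner : (fun x' => mderiv α (fun ξ' => h (x', ξ')) ξ) =
      fun x' => DL (Ξl α) h (x', ξ) := by
    funext x'
    have := foldr_slice_right hh α x' (List.finRange n)
    exact congrFun this ξ
  show mderiv β _ x = _
  rw [show (fun x' => mderiv α (fun ξ' => h (x', ξ')) ξ) = fun x' => DL (Ξl α) h (x', ξ)
    from inner]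
  have := foldr_slice_left (DL_smooth hh (Ξl α)) β ξ (List.finRange n)
  rw [show mderiv β (fun x' => DL (Ξl α) h (x', ξ)) = _ from this]
  show DL (Xl β) (DL (Ξl α) h) (x, ξ) = _
  rw [canon, DL_append]

/-! ### permutation bookkeeping -/

lemma flatMap_congr_mem {ι κ' : Type*} {J : List ι} {f g : ι → List κ'}
    (h : ∀ j ∈ J, f j = g j) : J.flatMap f = J.flatMap g := by
  induction J with
  | nil => rfl
  | cons j J ih =>
    rw [List.flatMap_cons, List.flatMap_cons, h j (by simp), ih fun j hj => h j (by simp [hj])]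

lemma cons_flatMap_perm {ι κ' : Type*} {J : List ι} {i : ι} (hi : i ∈ J) (hnd : J.Nodup)
    {f g : ι → ℕ} (tag : ι → κ') (hgi : g i = f i + 1) (hgo : ∀ j, j ≠ i → g j = f j) :
    List.Perm ((tag i) :: J.flatMap fun j => List.replicate (f j) (tag j))
      (J.flatMap fun j => List.replicate (g j) (tag j)) := by
  induction J with
  | nil => simp at hi
  | cons j J ih =>
    rw [List.flatMap_cons, List.flatMap_cons]
    rcases eq_or_ne j i with rfl | hne
    · have hrest : (J.flatMap fun j' => List.replicate (f j') (tag j')) =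
          J.flatMap fun j' => List.replicate (g j') (tag j') := by
        apply flatMap_congr_mem
        intro j' hj'
        rw [hgo j' (by rintro rfl; exact (List.nodup_cons.mp hnd).1 hj')]
      rw [hrest, hgi, List.replicate_succ]
      exact List.Perm.refl _
    · have hi' : i ∈ J := by
        rcases List.mem_cons.mp hi with h | h
        · exact absurd h.symm hne
        · exact h
      have step := (List.perm_middle (a := tag i)
        (l₁ := List.replicate (f j) (tag j))
        (l₂ := J.flatMap fun j' => List.replicate (f j') (tag j'))).symm
      refine step.trans ?_
      rw [hgo j hne]
      exact List.Perm.append_left _ (ih hi' (List.nodup_cons.mp hnd).2)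

def ud : Dir n → blk n
  | Sum.inl i => ((0 : Fin n → ℕ), Pi.single i 1)
  | Sum.inr i => (Pi.single i 1, (0 : Fin n → ℕ))

def bump (d : Dir n) (c : blk n) : blk n := (c.1 + (ud d).1, c.2 + (ud d).2)

lemma canon_zero : canon (0 : Fin n → ℕ) 0 = [] := by
  simp [canon, Xl, Ξl]

lemma canon_perm (d : Dir n) (c : blk n) :
    List.Perm (d :: canon c.1 c.2) (canon (bump d c).1 (bump d c).2) := by
  cases d with
  | inl i =>
    show List.Perm (Sum.inl i :: (Xl c.2 ++ Ξl c.1)) (Xl (c.2 + Pi.single i 1) ++ Ξl (c.1 + 0))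
    rw [show c.1 + 0 = c.1 by simp]
    rw [show (Sum.inl i :: (Xl c.2 ++ Ξl c.1)) = (Sum.inl i :: Xl c.2) ++ Ξl c.1 from rfl]
    apply List.Perm.append_right
    exact cons_flatMap_perm (List.mem_finRange i) (List.nodup_finRange n) Sum.inl
      (by simp) (fun j hj => by simp [Pi.single_eq_of_ne hj])
  | inr i =>
    show List.Perm (Sum.inr i :: (Xl c.2 ++ Ξl c.1)) (Xl (c.2 + 0) ++ Ξl (c.1 + Pi.single i 1))
    rw [show c.2 + 0 = c.2 by simp]
    refine (List.perm_middle (a := Sum.inr i) (l₁ := Xl c.2) (l₂ := Ξl c.1)).symm.trans ?_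
    apply List.Perm.append_left
    exact cons_flatMap_perm (List.mem_finRange i) (List.nodup_finRange n) Sum.inr
      (by simp) (fun j hj => by simp [Pi.single_eq_of_ne hj])


/-! ### combinatorial estimates -/


lemma choose_le_two_pow (nn k : ℕ) (hk : k ≤ nn) : nn.choose k ≤ 2 ^ nn := by
  calc nn.choose k ≤ ∑ m ∈ Finset.range (nn+1), nn.choose m :=
        Finset.single_le_sum (f := fun m => nn.choose m) (fun _ _ => Nat.zero_le _)
          (Finset.mem_range.mpr (by omega))
    _ = 2 ^ nn := Nat.sum_range_choose nn

lemma add_factorial_le (a b : ℕ) : (a+b).factorial ≤ 2^(a+b) * (a.factorial * b.factorial) := by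
  have h := Nat.choose_mul_factorial_mul_factorial (Nat.le_add_right a b)
  have h2 : (a+b) - a = b := by omega
  rw [h2] at h
  calc (a+b).factorial = (a+b).choose a * a.factorial * b.factorial := h.symm
    _ ≤ 2^(a+b) * a.factorial * b.factorial := by
        have := choose_le_two_pow (a+b) a (Nat.le_add_right a b)
        exact Nat.mul_le_mul_right _ (Nat.mul_le_mul_right _ this)
    _ = 2^(a+b) * (a.factorial * b.factorial) := by ring

lemma sum_factorial_le {ι : Type*} (s : Finset ι) (f : ι → ℕ) :
    (∑ i ∈ s, f i).factorial ≤ 2^((∑ i ∈ s, f i) * s.card) * ∏ i ∈ s, (f i).factorial := by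
  induction s using Finset.cons_induction with
  | empty => simp
  | cons a s ha ih =>
    rw [Finset.sum_cons, Finset.prod_cons, Finset.card_cons]
    calc (f a + ∑ i ∈ s, f i).factorial
        ≤ 2^(f a + ∑ i ∈ s, f i) * ((f a).factorial * (∑ i ∈ s, f i).factorial) :=
          add_factorial_le _ _
      _ ≤ 2^(f a + ∑ i ∈ s, f i) * ((f a).factorial *
            (2^((∑ i ∈ s, f i) * s.card) * ∏ i ∈ s, (f i).factorial)) := by
          exact Nat.mul_le_mul_left _ (Nat.mul_le_mul_left _ ih)
      _ = 2^((f a + ∑ i ∈ s, f i) + (∑ i ∈ s, f i) * s.card) *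
            ((f a).factorial * ∏ i ∈ s, (f i).factorial) := by
          rw [pow_add]; ring
      _ ≤ 2^((f a + ∑ i ∈ s, f i) * (s.card + 1)) *
            ((f a).factorial * ∏ i ∈ s, (f i).factorial) := by
          apply Nat.mul_le_mul_right
          apply Nat.pow_le_pow_right (by norm_num)
          nlinarith [Nat.zero_le (f a), Nat.zero_le (∑ i ∈ s, f i)]

lemma prod_factorial_le {ι : Type*} (s : Finset ι) (f : ι → ℕ) :
    (∏ i ∈ s, (f i).factorial) ≤ (∑ i ∈ s, f i).factorial := by
  induction s using Finset.cons_induction with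
  | empty => simp
  | cons a s ha ih =>
    rw [Finset.sum_cons, Finset.prod_cons]
    calc (f a).factorial * ∏ i ∈ s, (f i).factorial
        ≤ (f a).factorial * (∑ i ∈ s, f i).factorial := Nat.mul_le_mul_left _ ih
      _ ≤ (f a + ∑ i ∈ s, f i).factorial :=
          Nat.le_of_dvd (Nat.factorial_pos _)
            (Nat.factorial_mul_factorial_dvd_factorial_add _ _)

lemma fact_ratio (Q N : ℕ) : (Q+N).factorial ≤ Q.factorial * (Q+N)^N := by
  induction N with
  | zero => simp
  | succ N ih =>
    rw [show Q + (N+1) = (Q+N) + 1 by ring, Nat.factorial_succ]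
    calc (Q+N+1) * (Q+N).factorial ≤ (Q+N+1) * (Q.factorial * (Q+N)^N) :=
          Nat.mul_le_mul_left _ ih
      _ ≤ (Q+N+1) * (Q.factorial * (Q+N+1)^N) := by
          apply Nat.mul_le_mul_left
          apply Nat.mul_le_mul_left
          exact Nat.pow_le_pow_left (by omega) N
      _ = Q.factorial * (Q+N+1)^(N+1) := by rw [pow_succ]; ring



def Ef (l j q : ℕ) : ℝ :=
  if j ≤ l then 2^l * (Nat.factorial (l + q + 2*j)) / (Nat.factorial (q + 2*j) * Nat.factorial j)
  else 0

lemma Ef_nonneg (l j q : ℕ) : 0 ≤ Ef l j q := by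
  unfold Ef; split <;> positivity

lemma fact_succ_cast (m : ℕ) : ((m+1).factorial : ℝ) = (m+1) * m.factorial := by
  rw [Nat.factorial_succ]; push_cast; ring

lemma Ef_single (l j q : ℕ) : Ef l j (q+2) ≤ (1/2) * Ef (l+1) (j+1) q := by
  unfold Ef
  by_cases h : j ≤ l
  · rw [if_pos h, if_pos (by omega)]
    have e1 : l + (q+2) + 2*j = (l + (q + 2*j + 2)) := by ring
    have e2 : q + 2 + 2*j = q + 2*j + 2 := by ring
    have e3 : l + 1 + q + 2*(j+1) = (l + (q + 2*j + 2)) + 1 := by ring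
    have e4 : q + 2*(j+1) = q + 2*j + 2 := by ring
    rw [e1, e2, e3, e4]
    set Q := q + 2*j + 2 with hQ
    rw [← mul_div_assoc, div_le_div_iff₀ (by positivity) (by positivity)]
    have hfe : ((l + Q + 1).factorial : ℝ) = (l + Q + 1) * (l + Q).factorial := by
      exact_mod_cast fact_succ_cast (l + Q)
    have hje : ((j+1).factorial : ℝ) = (j+1) * j.factorial := fact_succ_cast j
    have hle : (j : ℝ) + 1 ≤ (l : ℝ) + Q + 1 := by
      have : (j:ℝ) ≤ l := by exact_mod_cast h
      have hQ0 : (0:ℝ) ≤ Q := by positivity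
      linarith
    have h1 : (0:ℝ) < 2 ^ l := by positivity
    have hfp : (0:ℝ) < ((l+Q).factorial : ℝ) := by exact_mod_cast Nat.factorial_pos _
    have hQp : (0:ℝ) < (Q.factorial : ℝ) := by exact_mod_cast Nat.factorial_pos _
    have hjp : (0:ℝ) < (j.factorial : ℝ) := by exact_mod_cast Nat.factorial_pos _
    rw [show l + Q + 1 = (l + Q) + 1 from rfl] at *
    calc (2:ℝ)^l * (l + Q).factorial * (Q.factorial * ((j+1).factorial))
        = 2^l * (l+Q).factorial * Q.factorial * j.factorial * (j+1) := by rw [hje]; ring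
      _ ≤ 2^l * (l+Q).factorial * Q.factorial * j.factorial * ((l:ℝ) + Q + 1) := by
          apply mul_le_mul_of_nonneg_left hle; positivity
      _ = 1/2 * (2^(l+1) * (((l:ℝ)+Q+1) * (l+Q).factorial)) * (Q.factorial * j.factorial) := by
          rw [pow_succ]; ring
      _ = 1/2 * (2^(l+1) * (((l+Q)+1).factorial)) * (Q.factorial * j.factorial) := by
          rw [hfe]
  · rw [if_neg h]
    split <;> positivity

lemma Ef_attach (l j q : ℕ) : (q:ℝ) * Ef l j (q+1) ≤ (1/2) * Ef (l+1) j q := by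
  unfold Ef
  by_cases h : j ≤ l
  · rw [if_pos h, if_pos (by omega)]
    have e1 : l + (q+1) + 2*j = (l + (q + 2*j)) + 1 := by ring
    have e2 : q + 1 + 2*j = (q + 2*j) + 1 := by ring
    have e3 : l + 1 + q + 2*j = (l + (q + 2*j)) + 1 := by ring
    rw [e1, e2, e3]
    set Q := q + 2*j with hQ
    have hfp : (0:ℝ) < (((l+Q)+1).factorial : ℝ) := by exact_mod_cast Nat.factorial_pos _
    have hQp : (0:ℝ) < (Q.factorial : ℝ) := by exact_mod_cast Nat.factorial_pos _
    have hQp1 : (0:ℝ) < ((Q+1).factorial : ℝ) := by exact_mod_cast Nat.factorial_pos _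
    have hjp : (0:ℝ) < (j.factorial : ℝ) := by exact_mod_cast Nat.factorial_pos _
    rw [mul_div_assoc', ← mul_div_assoc, div_le_div_iff₀ (by positivity) (by positivity)]
    have hQe : ((Q+1).factorial : ℝ) = (Q+1) * Q.factorial := fact_succ_cast Q
    have hqQ : (q:ℝ) ≤ (Q:ℝ) + 1 := by
      have : q ≤ Q + 1 := by omega
      exact_mod_cast this
    calc (q:ℝ) * (2^l * ((l+Q)+1).factorial) * (Q.factorial * j.factorial)
        = (q:ℝ) * (2^l * ((l+Q)+1).factorial * Q.factorial * j.factorial) := by ring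
      _ ≤ ((Q:ℝ)+1) * (2^l * ((l+Q)+1).factorial * Q.factorial * j.factorial) := by
          apply mul_le_mul_of_nonneg_right hqQ; positivity
      _ = 1/2 * 2^(l+1) * ((l+Q)+1).factorial * (((Q:ℝ)+1) * Q.factorial) * j.factorial := by
          rw [pow_succ]; ring
      _ = 1/2 * (2^(l+1) * ((l+Q)+1).factorial) * ((Q+1).factorial * j.factorial) := by
          rw [hQe]; ring
  · rw [if_neg h]
    rw [mul_zero]
    split <;> positivity

def Sf (l q : ℕ) (t : ℝ) : ℝ := ∑ j ∈ Finset.range (l+2), t^j * Ef l j q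

lemma Sf_nonneg (l q : ℕ) {t : ℝ} (ht : 0 ≤ t) : 0 ≤ Sf l q t := by
  apply Finset.sum_nonneg
  intro j _
  have := Ef_nonneg l j q
  positivity

lemma Sf_zero (q : ℕ) (t : ℝ) : Sf 0 q t = 1 := by
  unfold Sf
  rw [Finset.sum_range_succ, Finset.sum_range_one]
  have h0 : Ef 0 0 q = 1 := by
    unfold Ef
    rw [if_pos (le_refl 0)]
    have : (q.factorial : ℝ) ≠ 0 := by exact_mod_cast (Nat.factorial_pos q).ne'
    field_simp
    simp
  have h1 : Ef 0 1 q = 0 := by unfold Ef; rw [if_neg (by omega)]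
  rw [h0, h1]; ring

lemma Sf_rec (l q : ℕ) {t : ℝ} (ht : 0 ≤ t) :
    t * Sf l (q+2) t + q * Sf l (q+1) t ≤ Sf (l+1) q t := by
  have hsplit : Sf (l+1) q t
      = (∑ j ∈ Finset.range (l+2), t^(j+1) * Ef (l+1) (j+1) q) + t^0 * Ef (l+1) 0 q := by
    unfold Sf
    rw [show l + 1 + 2 = (l+2) + 1 by ring, Finset.sum_range_succ']
  have h1 : t * Sf l (q+2) t
      ≤ (1/2) * ∑ j ∈ Finset.range (l+2), t^(j+1) * Ef (l+1) (j+1) q := by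
    unfold Sf
    rw [Finset.mul_sum, Finset.mul_sum]
    apply Finset.sum_le_sum
    intro j _
    have h := Ef_single l j q
    have htj : (0:ℝ) ≤ t^(j+1) := pow_nonneg ht (j+1)
    calc t * (t^j * Ef l j (q+2)) = t^(j+1) * Ef l j (q+2) := by ring
      _ ≤ t^(j+1) * ((1/2) * Ef (l+1) (j+1) q) := mul_le_mul_of_nonneg_left h htj
      _ = 1/2 * (t^(j+1) * Ef (l+1) (j+1) q) := by ring
  have h2 : (q:ℝ) * Sf l (q+1) t ≤ (1/2) * ∑ j ∈ Finset.range (l+2), t^j * Ef (l+1) j q := by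
    unfold Sf
    rw [Finset.mul_sum, Finset.mul_sum]
    apply Finset.sum_le_sum
    intro j _
    have h := Ef_attach l j q
    have htj : (0:ℝ) ≤ t^j := pow_nonneg ht j
    calc (q:ℝ) * (t^j * Ef l j (q+1)) = t^j * ((q:ℝ) * Ef l j (q+1)) := by ring
      _ ≤ t^j * ((1/2) * Ef (l+1) j q) := mul_le_mul_of_nonneg_left h htj
      _ = 1/2 * (t^j * Ef (l+1) j q) := by ring
  have h3 : ∑ j ∈ Finset.range (l+2), t^j * Ef (l+1) j q ≤ Sf (l+1) q t := by
    have : Sf (l+1) q t = ∑ j ∈ Finset.range (l+3), t^j * Ef (l+1) j q := rfl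
    rw [this]
    apply Finset.sum_le_sum_of_subset_of_nonneg
    · intro j hj
      simp only [Finset.mem_range] at *
      omega
    · intro j _ _
      have := Ef_nonneg (l+1) j q
      positivity
  have h4 : 0 ≤ t^0 * Ef (l+1) 0 q := by
    have := Ef_nonneg (l+1) 0 q
    positivity
  linarith

lemma Ef_le_aux (N j : ℕ) : Ef N j 0 ≤ (2^N * (3*N)^N : ℝ) / j.factorial := by
  unfold Ef
  split
  · rename_i h
    rw [div_le_div_iff₀ (by positivity) (by positivity)]
    have key : ((N + 0 + 2*j).factorial : ℝ) ≤ ((0 + 2*j).factorial : ℝ) * (3*(N:ℝ))^N := by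
      have h1 : (2*j + N).factorial ≤ (2*j).factorial * (2*j+N)^N := fact_ratio (2*j) N
      have h2 : (2*j).factorial * (2*j+N)^N ≤ (2*j).factorial * (3*N)^N := by
        apply Nat.mul_le_mul_left
        apply Nat.pow_le_pow_left
        omega
      have h3 := le_trans h1 h2
      rw [show N + 0 + 2*j = 2*j + N by ring, show 0 + 2*j = 2*j by ring]
      exact_mod_cast h3
    calc (2:ℝ)^N * (N + 0 + 2*j).factorial * (j.factorial : ℝ)
        ≤ 2^N * (((0 + 2*j).factorial : ℝ) * (3*(N:ℝ))^N) * j.factorial := by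
          apply mul_le_mul_of_nonneg_right _ (by positivity)
          exact mul_le_mul_of_nonneg_left key (by positivity)
      _ = 2^N * (3*(N:ℝ))^N * (((0 + 2*j).factorial : ℝ) * j.factorial) := by ring
  · positivity

lemma pow_le_exp_fact (N : ℕ) : ((N:ℝ))^N ≤ Real.exp N * N.factorial := by
  have h0 : ((N:ℝ))^N / N.factorial ≤ Real.exp N := by
    have hmem : N ∈ Finset.range (N+1) := Finset.mem_range.mpr (by omega)
    have hterm := Finset.single_le_sum
      (f := fun i => (N:ℝ)^i / i.factorial)
      (fun i _ => by positivity) hmem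
    have hsum := Real.sum_le_exp_of_nonneg (x := (N:ℝ)) (by positivity) (N+1)
    exact le_trans hterm hsum
  have hf : (0:ℝ) < N.factorial := by exact_mod_cast Nat.factorial_pos N
  calc ((N:ℝ))^N = ((N:ℝ))^N / N.factorial * N.factorial := by field_simp
    _ ≤ Real.exp N * N.factorial := by
        apply mul_le_mul_of_nonneg_right h0 (le_of_lt hf)

lemma Sf_le (N : ℕ) {t : ℝ} (ht : 0 ≤ t) :
    Sf N 0 t ≤ (2^N * (3*N)^N : ℝ) * Real.exp t := by
  unfold Sf
  calc ∑ j ∈ Finset.range (N+2), t^j * Ef N j 0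
      ≤ ∑ j ∈ Finset.range (N+2), (2^N * (3*N)^N : ℝ) * (t^j / j.factorial) := by
        apply Finset.sum_le_sum
        intro j _
        have h := Ef_le_aux N j
        have htj : (0:ℝ) ≤ t^j := pow_nonneg ht j
        calc t^j * Ef N j 0 ≤ t^j * ((2^N * (3*N)^N : ℝ) / j.factorial) :=
              mul_le_mul_of_nonneg_left h htj
          _ = (2^N * (3*N)^N : ℝ) * (t^j / j.factorial) := by ring
    _ = (2^N * (3*N)^N : ℝ) * ∑ j ∈ Finset.range (N+2), t^j / j.factorial := by
        rw [Finset.mul_sum]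
    _ ≤ (2^N * (3*N)^N : ℝ) * Real.exp t := by
        apply mul_le_mul_of_nonneg_left (Real.sum_le_exp_of_nonneg ht (N+2)) (by positivity)


/-! ### statistics of blocks -/

lemma mdeg_add (a b : Fin n → ℕ) : mdeg (a + b) = mdeg a + mdeg b := by
  unfold mdeg; rw [← Finset.sum_add_distrib]; rfl

lemma mdeg_single (i : Fin n) : mdeg (Pi.single i 1 : Fin n → ℕ) = 1 := by
  unfold mdeg; simp

lemma mdeg_zero : mdeg (0 : Fin n → ℕ) = 0 := by unfold mdeg; simp

lemma mfact_zero : mfact (0 : Fin n → ℕ) = 1 := by unfold mfact; simp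

lemma one_le_mfact (a : Fin n → ℕ) : 1 ≤ mfact a := by
  unfold mfact
  exact Finset.one_le_prod' fun i _ => Nat.one_le_iff_ne_zero.mpr (Nat.factorial_pos _).ne'

lemma mfact_mul_le (a b : Fin n → ℕ) : mfact a * mfact b ≤ mfact (a + b) := by
  unfold mfact
  rw [← Finset.prod_mul_distrib]
  apply Finset.prod_le_prod' 
  intro i _
  exact Nat.le_of_dvd (Nat.factorial_pos _)
    (Nat.factorial_mul_factorial_dvd_factorial_add _ _)

lemma mfact_le_fact_mdeg (a : Fin n → ℕ) : mfact a ≤ (mdeg a).factorial :=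
  prod_factorial_le Finset.univ a

lemma fact_mdeg_le_mfact (a : Fin n → ℕ) : (mdeg a).factorial ≤ (2^n)^(mdeg a) * mfact a := by
  have h := sum_factorial_le Finset.univ a
  have hc : (Finset.univ : Finset (Fin n)).card = n := by simp
  calc (mdeg a).factorial ≤ 2^(mdeg a * n) * mfact a := by
        have := h
        rw [hc] at this
        exact this
    _ = (2^n)^(mdeg a) * mfact a := by rw [← pow_mul]; ring

def dr : Dir n → ℕ := Sum.elim (fun _ => 0) (fun _ => 1)
def cntR (L : List (Dir n)) : ℕ := (L.map dr).sum
def cntA (L : List (Dir n)) : Fin n → ℕ := (L.map fun d => (ud d).1).sum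
def cntB (L : List (Dir n)) : Fin n → ℕ := (L.map fun d => (ud d).2).sum
def bsz (c : blk n) : ℕ := mdeg c.1 + mdeg c.2
def szm (m : List (blk n)) : ℕ := (m.map bsz).sum
def amd (m : List (blk n)) : ℕ := (m.map fun c => mdeg c.1).sum
def wm (m : List (blk n)) : ℕ := (m.map fun c => (bsz c).factorial).prod
def qm (m : List (blk n)) : ℕ := szm m + m.length
def sA (m : List (blk n)) : Fin n → ℕ := (m.map Prod.fst).sum
def sB (m : List (blk n)) : Fin n → ℕ := (m.map Prod.snd).sum
def Γf (L : List (Dir n)) (m : List (blk n)) : ℕ :=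
  mfact (cntA L + sA m) * mfact (cntB L + sB m)

lemma bsz_ud (d : Dir n) : bsz (ud d) = 1 := by
  cases d <;> simp [bsz, ud, mdeg_single, mdeg_zero]

lemma mdeg_ud_fst (d : Dir n) : mdeg (ud d).1 = dr d := by
  cases d <;> simp [ud, dr, mdeg_single, mdeg_zero]

lemma bsz_bump (d : Dir n) (c : blk n) : bsz (bump d c) = bsz c + 1 := by
  cases d <;> simp [bsz, bump, ud, mdeg_add, mdeg_single, mdeg_zero] <;> ring

lemma mdeg_bump_fst (d : Dir n) (c : blk n) : mdeg (bump d c).1 = mdeg c.1 + dr d := by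
  cases d <;> simp [bump, ud, dr, mdeg_add, mdeg_single, mdeg_zero]

lemma szm_cons (c : blk n) (m : List (blk n)) : szm (c :: m) = bsz c + szm m := by
  simp [szm]
lemma amd_cons (c : blk n) (m : List (blk n)) : amd (c :: m) = mdeg c.1 + amd m := by
  simp [amd]
lemma wm_cons (c : blk n) (m : List (blk n)) : wm (c :: m) = (bsz c).factorial * wm m := by
  simp [wm]
lemma sA_cons (c : blk n) (m : List (blk n)) : sA (c :: m) = c.1 + sA m := by
  simp [sA]
lemma sB_cons (c : blk n) (m : List (blk n)) : sB (c :: m) = c.2 + sB m := by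
  simp [sB]
lemma qm_cons (c : blk n) (m : List (blk n)) : qm (c :: m) = bsz c + 1 + qm m := by
  simp [qm, szm_cons]; ring
lemma cntR_append (L : List (Dir n)) (d : Dir n) : cntR (L ++ [d]) = cntR L + dr d := by
  simp [cntR]
lemma cntA_append (L : List (Dir n)) (d : Dir n) : cntA (L ++ [d]) = cntA L + (ud d).1 := by
  simp [cntA]
lemma cntB_append (L : List (Dir n)) (d : Dir n) : cntB (L ++ [d]) = cntB L + (ud d).2 := by
  simp [cntB]

def bumps (d : Dir n) : List (blk n) → List (List (blk n))
  | [] => []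
  | c :: m => (bump d c :: m) :: (bumps d m).map (c :: ·)

lemma bumps_stats (d : Dir n) (m : List (blk n)) :
    ∀ m' ∈ bumps d m, m'.length = m.length ∧ szm m' = szm m + 1 ∧
      amd m' = amd m + dr d ∧ sA m' = sA m + (ud d).1 ∧ sB m' = sB m + (ud d).2 := by
  induction m with
  | nil => intro m' hm'; simp [bumps] at hm'
  | cons c m ih =>
    intro m' hm'
    rw [bumps] at hm'
    rcases List.mem_cons.mp hm' with rfl | hm'
    · refine ⟨by simp, ?_, ?_, ?_, ?_⟩
      · rw [szm_cons, szm_cons, bsz_bump]; ring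
      · rw [amd_cons, amd_cons, mdeg_bump_fst]; ring
      · rw [sA_cons, sA_cons, bump]
        show c.1 + (ud d).1 + sA m = c.1 + sA m + (ud d).1
        ring
      · rw [sB_cons, sB_cons, bump]
        show c.2 + (ud d).2 + sB m = c.2 + sB m + (ud d).2
        ring
    · obtain ⟨m'', hm'', rfl⟩ := List.mem_map.mp hm'
      obtain ⟨h1, h2, h3, h4, h5⟩ := ih m'' hm''
      refine ⟨by simp [h1], ?_, ?_, ?_, ?_⟩
      · rw [szm_cons, szm_cons, h2]; ring
      · rw [amd_cons, amd_cons, h3]; ring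
      · rw [sA_cons, sA_cons, h4]; ring
      · rw [sB_cons, sB_cons, h5]; ring

lemma bumps_wm_sum (d : Dir n) (m : List (blk n)) :
    ((bumps d m).map wm).sum = qm m * wm m := by
  induction m with
  | nil => simp [bumps, qm, szm, wm]
  | cons c m ih =>
    rw [bumps]
    simp only [List.map_cons, List.sum_cons, List.map_map]
    have hmap : ((bumps d m).map (wm ∘ (c :: ·))).sum = (bsz c).factorial * (qm m * wm m) := by
      have : (wm ∘ (c :: ·) : List (blk n) → ℕ) = fun m' => (bsz c).factorial * wm m' := by
        funext m'
        simp [wm_cons]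
      rw [this, List.sum_map_mul_left, ih]
    rw [hmap, wm_cons (bump d c), bsz_bump, wm_cons, qm_cons, Nat.factorial_succ]
    ring


/-! ### the exponential weight and its derivatives -/

def lamF (Λ : En n → En n → ℝ) : E2 n → ℝ := fun p => Λ p.1 p.2
def tv (κ ρ₀ : ℝ) (p : E2 n) : ℝ := ρ₀ * jbn p.2 ^ (1/κ)
def Bf (Λ : En n → En n → ℝ) (c : blk n) : E2 n → ℝ := DL (canon c.1 c.2) (lamF Λ)
def Gf (s : ℝ) (Λ : En n → En n → ℝ) (m : List (blk n)) : E2 n → ℝ :=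
  fun p => Real.exp (s * lamF Λ p) * (m.map fun c => Bf Λ c p).prod

lemma one_le_jbn (ξ : En n) : 1 ≤ jbn ξ := by
  unfold jbn
  have h : (1:ℝ) ≤ 1 + ‖ξ‖^2 := by nlinarith [sq_nonneg (‖ξ‖)]
  calc (1:ℝ) = Real.sqrt 1 := Real.sqrt_one.symm
    _ ≤ Real.sqrt (1 + ‖ξ‖^2) := Real.sqrt_le_sqrt h

lemma jbn_pos (ξ : En n) : 0 < jbn ξ := lt_of_lt_of_le one_pos (one_le_jbn ξ)

section deriv

variable {s : ℝ} {Λ : En n → En n → ℝ}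

lemma Gf_nil : Gf s Λ [] = fun p => Real.exp (s * lamF Λ p) := by
  funext p; simp [Gf]

lemma Gf_cons (c : blk n) (m : List (blk n)) :
    Gf s Λ (c :: m) = fun p => Bf Λ c p * Gf s Λ m p := by
  funext p; simp only [Gf, List.map_cons, List.prod_cons]; ring

lemma exp_smooth (hΛ : ContDiff ℝ (⊤ : ℕ∞) (lamF Λ)) :
    ContDiff ℝ (⊤ : ℕ∞) (fun p => Real.exp (s * lamF Λ p)) :=
  (contDiff_const.mul hΛ).exp

lemma Bf_smooth (hΛ : ContDiff ℝ (⊤ : ℕ∞) (lamF Λ)) (c : blk n) :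
    ContDiff ℝ (⊤ : ℕ∞) (Bf Λ c) := DL_smooth hΛ _

lemma Gf_smooth (hΛ : ContDiff ℝ (⊤ : ℕ∞) (lamF Λ)) (m : List (blk n)) :
    ContDiff ℝ (⊤ : ℕ∞) (Gf s Λ m) := by
  induction m with
  | nil => rw [Gf_nil]; exact exp_smooth hΛ
  | cons c m ih =>
    rw [Gf_cons]
    exact (Bf_smooth hΛ c).mul ih

lemma Bf_deriv (hΛ : ContDiff ℝ (⊤ : ℕ∞) (lamF Λ)) (d : Dir n) (c : blk n) :
    (fun p => fderiv ℝ (Bf Λ c) p (dvec d)) = Bf Λ (bump d c) := by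
  have h1 : (fun p => fderiv ℝ (Bf Λ c) p (dvec d)) = DL (d :: canon c.1 c.2) (lamF Λ) := rfl
  rw [h1, DL_perm hΛ (canon_perm d c)]
  rfl

lemma bump_zero (d : Dir n) : bump d ((0 : Fin n → ℕ), (0 : Fin n → ℕ)) = ud d := by
  cases d <;> simp [bump, ud]

lemma Bf_ud (hΛ : ContDiff ℝ (⊤ : ℕ∞) (lamF Λ)) (d : Dir n) :
    Bf Λ (ud d) = fun p => fderiv ℝ (lamF Λ) p (dvec d) := by
  have hperm := canon_perm d ((0 : Fin n → ℕ), (0 : Fin n → ℕ))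
  rw [canon_zero, bump_zero] at hperm
  unfold Bf
  rw [← DL_perm hΛ hperm]
  rfl

lemma fderiv_Gf (hΛ : ContDiff ℝ (⊤ : ℕ∞) (lamF Λ)) (d : Dir n) (m : List (blk n)) :
    (fun p => fderiv ℝ (Gf s Λ m) p (dvec d)) =
      fun p => s * Gf s Λ (ud d :: m) p + ((bumps d m).map fun m' => Gf s Λ m' p).sum := by
  induction m with
  | nil =>
    funext p
    have hlam : HasFDerivAt (lamF Λ) (fderiv ℝ (lamF Λ) p) p :=
      ((hΛ.differentiable one_le_inf) p).hasFDerivAt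
    have h1 : HasFDerivAt (fun q => s * lamF Λ q) (s • fderiv ℝ (lamF Λ) p) p :=
      hlam.const_mul s
    have h2 := h1.exp
    rw [Gf_nil, h2.fderiv]
    simp only [bumps, List.map_nil, List.sum_nil, add_zero]
    rw [Gf_cons, Gf_nil, Bf_ud hΛ d]
    simp only [ContinuousLinearMap.smul_apply, smul_eq_mul]
    ring
  | cons c m ih =>
    funext p
    rw [Gf_cons]
    have hBc : DifferentiableAt ℝ (Bf Λ c) p := (Bf_smooth hΛ c).differentiable one_le_inf p
    have hGm : DifferentiableAt ℝ (Gf s Λ m) p := (Gf_smooth hΛ m).differentiable one_le_inf p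
    rw [show (fun p => Bf Λ c p * Gf s Λ m p) = fun p => Bf Λ c p * Gf s Λ m p from rfl]
    rw [fderiv_fun_mul hBc hGm]
    have hBd := congrFun (Bf_deriv hΛ d c) p
    have hGd := congrFun ih p
    simp only [ContinuousLinearMap.add_apply, ContinuousLinearMap.smul_apply, smul_eq_mul]
    rw [hBd, hGd]
    -- now expand RHS
    rw [bumps]
    simp only [List.map_cons, List.sum_cons, List.map_map]
    have hcomp : ((fun m' => Gf s Λ m' p) ∘ (c :: ·)) = fun m' => Bf Λ c p * Gf s Λ m' p := by
      funext m'
      simp [Function.comp, Gf_cons]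
    rw [hcomp, List.sum_map_mul_left]
    rw [Gf_cons (ud d) (c :: m), Gf_cons c m, Gf_cons (bump d c) m, Gf_cons (ud d) m]
    simp only
    ring

end deriv


/-! ### the main pointwise estimate -/

section mainest

variable {κ μ A ρ₀ s : ℝ} {Λ : En n → En n → ℝ}

lemma abs_list_sum_le {α' : Type*} (l : List α') (f : α' → ℝ) :
    |(l.map f).sum| ≤ (l.map fun x => |f x|).sum := by
  induction l with
  | nil => simp
  | cons a l ih =>
    simp only [List.map_cons, List.sum_cons]
    exact (abs_add_le _ _).trans (by linarith)

lemma list_cast_sum (l : List (List (blk n))) (f : List (blk n) → ℕ) :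
    ((l.map fun x => ((f x : ℕ) : ℝ)).sum) = (((l.map f).sum : ℕ) : ℝ) := by
  induction l with
  | nil => simp
  | cons a l ih => simp [ih]

def Fc (c : blk n) : ℕ := mfact c.1 * mfact c.2

lemma one_le_Fc (c : blk n) : 1 ≤ Fc c :=
  Nat.one_le_iff_ne_zero.mpr (Nat.mul_ne_zero
    (Nat.one_le_iff_ne_zero.mp (one_le_mfact _)) (Nat.one_le_iff_ne_zero.mp (one_le_mfact _)))

lemma prodF_le_Γ (m : List (blk n)) :
    (m.map Fc).prod ≤ mfact (sA m) * mfact (sB m) := by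
  induction m with
  | nil => simp [sA, sB, mfact_zero]
  | cons c m ih =>
    rw [List.map_cons, List.prod_cons, sA_cons, sB_cons]
    calc Fc c * (m.map Fc).prod ≤ Fc c * (mfact (sA m) * mfact (sB m)) :=
          Nat.mul_le_mul_left _ ih
      _ = (mfact c.1 * mfact (sA m)) * (mfact c.2 * mfact (sB m)) := by
          unfold Fc; ring
      _ ≤ mfact (c.1 + sA m) * mfact (c.2 + sB m) :=
          Nat.mul_le_mul (mfact_mul_le _ _) (mfact_mul_le _ _)

lemma Fc_le_bsz (c : blk n) : Fc c ≤ (bsz c).factorial := by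
  calc Fc c ≤ (mdeg c.1).factorial * (mdeg c.2).factorial :=
        Nat.mul_le_mul (mfact_le_fact_mdeg _) (mfact_le_fact_mdeg _)
    _ ≤ (bsz c).factorial :=
        Nat.le_of_dvd (Nat.factorial_pos _)
          (Nat.factorial_mul_factorial_dvd_factorial_add _ _)

lemma prodF_le_wm (m : List (blk n)) : (m.map Fc).prod ≤ wm m := by
  unfold wm
  induction m with
  | nil => simp
  | cons c m ih =>
    rw [List.map_cons, List.prod_cons, List.map_cons, List.prod_cons]
    exact Nat.mul_le_mul (Fc_le_bsz c) ih

lemma Γf_nil (m : List (blk n)) : Γf ([] : List (Dir n)) m = mfact (sA m) * mfact (sB m) := by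
  simp [Γf, cntA, cntB]

lemma prodFμ_eq (hμ : 1 ≤ μ) (m : List (blk n)) :
    (m.map fun c => ((Fc c : ℕ) : ℝ) ^ μ).prod
      = (((m.map Fc).prod : ℕ) : ℝ) ^ (μ - 1) * (((m.map Fc).prod : ℕ) : ℝ) := by
  induction m with
  | nil => simp
  | cons c m ih =>
    simp only [List.map_cons, List.prod_cons]
    have hc : (0:ℝ) < ((Fc c : ℕ) : ℝ) := by exact_mod_cast one_le_Fc c
    have hp : (0:ℝ) ≤ (((m.map Fc).prod : ℕ) : ℝ) := by positivity
    have hsplit : ((Fc c : ℕ) : ℝ) ^ μ = ((Fc c : ℕ) : ℝ) ^ (μ - 1) * ((Fc c : ℕ) : ℝ) := by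
      have h := Real.rpow_add hc (μ - 1) 1
      rw [Real.rpow_one, show μ - 1 + 1 = μ by ring] at h
      exact h
    rw [ih, hsplit]
    rw [Nat.cast_mul, Real.mul_rpow (le_of_lt hc) hp]
    ring

lemma prodFμ_le (hμ : 1 ≤ μ) (m : List (blk n)) :
    (m.map fun c => ((Fc c : ℕ) : ℝ) ^ μ).prod
      ≤ ((Γf ([] : List (Dir n)) m : ℕ) : ℝ) ^ (μ - 1) * (wm m : ℝ) := by
  rw [prodFμ_eq hμ m, Γf_nil]
  apply mul_le_mul
  · apply Real.rpow_le_rpow (by positivity) _ (by linarith)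
    exact_mod_cast prodF_le_Γ m
  · exact_mod_cast prodF_le_wm m
  · positivity
  · positivity

def RHSf (κ μ A ρ₀ s : ℝ) (Λ : En n → En n → ℝ) (L : List (Dir n)) (m : List (blk n))
    (p : E2 n) : ℝ :=
  Real.exp (s * lamF Λ p) * A ^ (L.length + szm m)
    * jbn p.2 ^ (-((cntR L + amd m : ℕ) : ℝ))
    * ((Γf L m : ℕ) : ℝ) ^ (μ - 1) * (wm m : ℝ) * tv κ ρ₀ p ^ m.length
    * Sf L.length (qm m) (tv κ ρ₀ p)

lemma main_est (hμ : 1 ≤ μ) (hA : 0 < A) (hρ : 0 ≤ ρ₀) (hs : |s| ≤ 1)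
    (hΛ : ContDiff ℝ (⊤ : ℕ∞) (lamF Λ))
    (hbd : ∀ (c : blk n) (p : E2 n), |Bf Λ c p| ≤
      tv κ ρ₀ p * A ^ bsz c * ((Fc c : ℕ) : ℝ) ^ μ * jbn p.2 ^ (-(mdeg c.1 : ℝ))) :
    ∀ (L : List (Dir n)) (m : List (blk n)) (p : E2 n),
      |DL L (Gf s Λ m) p| ≤ RHSf κ μ A ρ₀ s Λ L m p := by
  intro L
  induction L using List.reverseRecOn with
  | nil =>
    intro m p
    have htv : 0 ≤ tv κ ρ₀ p := by
      unfold tv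
      have := (jbn_pos (p.2)).le
      positivity
    -- base case: no derivatives
    show |Gf s Λ m p| ≤ _
    have habs : |Gf s Λ m p| = Real.exp (s * lamF Λ p) * |(m.map fun c => Bf Λ c p).prod| := by
      rw [Gf, abs_mul, abs_of_pos (Real.exp_pos _)]
    -- product bound by induction on m
    have hprod : ∀ (m' : List (blk n)), |(m'.map fun c => Bf Λ c p).prod| ≤
        tv κ ρ₀ p ^ m'.length * A ^ szm m'
          * (m'.map fun c => ((Fc c : ℕ) : ℝ) ^ μ).prod
          * jbn p.2 ^ (-(amd m' : ℝ)) := by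
      intro m'
      induction m' with
      | nil => simp [szm, amd]
      | cons c m' ih =>
        rw [List.map_cons, List.prod_cons, abs_mul]
        have h1 := hbd c p
        have h2 : (0:ℝ) ≤ |(m'.map fun c => Bf Λ c p).prod| := abs_nonneg _
        have h3 : (0:ℝ) ≤ tv κ ρ₀ p * A ^ bsz c * ((Fc c : ℕ) : ℝ) ^ μ
            * jbn p.2 ^ (-(mdeg c.1 : ℝ)) :=
          mul_nonneg (mul_nonneg (mul_nonneg htv (pow_nonneg hA.le _))
            (Real.rpow_nonneg (Nat.cast_nonneg _) _)) (Real.rpow_nonneg (jbn_pos _).le _)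
        have hmul := mul_le_mul h1 ih h2 h3
        refine hmul.trans (le_of_eq ?_)
        rw [szm_cons, amd_cons, List.map_cons, List.prod_cons]
        have hy : jbn p.2 ^ (-(mdeg c.1 : ℝ)) * jbn p.2 ^ (-(amd m' : ℝ))
            = jbn p.2 ^ (-((mdeg c.1 + amd m' : ℕ) : ℝ)) := by
          rw [← Real.rpow_add (jbn_pos _)]
          congr 1
          push_cast
          ring
        rw [pow_add]
        calc tv κ ρ₀ p * A ^ bsz c * ((Fc c:ℕ):ℝ) ^ μ * jbn p.2 ^ (-(mdeg c.1 : ℝ))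
              * (tv κ ρ₀ p ^ m'.length * A ^ szm m'
                * (m'.map fun c => ((Fc c : ℕ) : ℝ) ^ μ).prod * jbn p.2 ^ (-(amd m' : ℝ)))
            = tv κ ρ₀ p ^ (m'.length + 1) * (A ^ bsz c * A ^ szm m')
              * (((Fc c:ℕ):ℝ) ^ μ * (m'.map fun c => ((Fc c : ℕ) : ℝ) ^ μ).prod)
              * (jbn p.2 ^ (-(mdeg c.1 : ℝ)) * jbn p.2 ^ (-(amd m' : ℝ))) := by
              rw [pow_succ]
              ring
          _ = tv κ ρ₀ p ^ (c :: m').length * (A ^ bsz c * A ^ szm m')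
              * (((Fc c:ℕ):ℝ) ^ μ * (m'.map fun c => ((Fc c : ℕ) : ℝ) ^ μ).prod)
              * jbn p.2 ^ (-((mdeg c.1 + amd m' : ℕ) : ℝ)) := by
              rw [hy, List.length_cons]
          _ = _ := by ring
    have hμprod := prodFμ_le (n := n) hμ m
    -- assemble
    have hexp : (0:ℝ) < Real.exp (s * lamF Λ p) := Real.exp_pos _
    have hy0 : (0:ℝ) ≤ jbn p.2 := (jbn_pos _).le
    have hRHS : RHSf κ μ A ρ₀ s Λ ([] : List (Dir n)) m p
        = Real.exp (s * lamF Λ p) * (tv κ ρ₀ p ^ m.length * A ^ szm m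
            * (((Γf ([] : List (Dir n)) m : ℕ) : ℝ) ^ (μ - 1) * (wm m : ℝ))
            * jbn p.2 ^ (-(amd m : ℝ))) := by
      unfold RHSf
      have hcnt : cntR ([] : List (Dir n)) = 0 := by simp [cntR]
      rw [hcnt, List.length_nil, Sf_zero, Nat.zero_add, Nat.zero_add]
      ring
    rw [hRHS, habs]
    apply mul_le_mul_of_nonneg_left _ hexp.le
    refine (hprod m).trans ?_
    apply mul_le_mul_of_nonneg_right _ (Real.rpow_nonneg hy0 _)
    apply mul_le_mul_of_nonneg_left hμprod
    have htv' : (0:ℝ) ≤ tv κ ρ₀ p ^ m.length := pow_nonneg htv _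
    positivity
  | append_singleton L d ih =>
    intro m p
    have htv : ∀ q : E2 n, 0 ≤ tv κ ρ₀ q := by
      intro q
      unfold tv
      have := (jbn_pos (q.2)).le
      positivity
    -- rewrite the derivative
    have hDL : DL (L ++ [d]) (Gf s Λ m) = DL L (fun p => fderiv ℝ (Gf s Λ m) p (dvec d)) := by
      rw [DL_append]
      rfl
    rw [hDL, fderiv_Gf hΛ d m]
    have hsm1 : ContDiff ℝ (⊤ : ℕ∞) (fun p => s * Gf s Λ (ud d :: m) p) :=
      contDiff_const.mul (Gf_smooth hΛ _)
    have hsm2 : ContDiff ℝ (⊤ : ℕ∞)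
        (fun p => ((bumps d m).map fun m' => Gf s Λ m' p).sum) :=
      contDiff_listSum (Gf s Λ) (bumps d m) (fun m' _ => Gf_smooth hΛ m')
    rw [DL_add hsm1 hsm2 L]
    rw [DL_const_mul (Gf_smooth hΛ (ud d :: m)) s L]
    rw [DL_listSum (Gf s Λ) L (bumps d m) (fun m' _ => Gf_smooth hΛ m')]
    -- the common factor
    set y := jbn p.2 with hy
    set T := tv κ ρ₀ p with hT
    have hT0 : 0 ≤ T := htv p
    set D := Real.exp (s * lamF Λ p) * A ^ (L.length + 1 + szm m)
      * y ^ (-((cntR L + dr d + amd m : ℕ) : ℝ))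
      * ((Γf (L ++ [d]) m : ℕ) : ℝ) ^ (μ - 1) * T ^ m.length with hD
    have hD0 : 0 ≤ D := by
      rw [hD]
      apply mul_nonneg
      apply mul_nonneg
      apply mul_nonneg
      apply mul_nonneg
      · exact (Real.exp_pos _).le
      · exact pow_nonneg hA.le _
      · exact Real.rpow_nonneg (jbn_pos p.2).le _
      · exact Real.rpow_nonneg (Nat.cast_nonneg _) _
      · exact pow_nonneg hT0 _
    -- claim 1
    have claim1 : RHSf κ μ A ρ₀ s Λ L (ud d :: m) p
        = D * (wm m : ℝ) * (T * Sf L.length (qm m + 2) T) := by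
      unfold RHSf
      rw [hD]
      have e1 : L.length + szm (ud d :: m) = L.length + 1 + szm m := by
        rw [szm_cons, bsz_ud]; ring
      have e2 : cntR L + amd (ud d :: m) = cntR L + dr d + amd m := by
        rw [amd_cons, mdeg_ud_fst]; ring
      have e3 : Γf L (ud d :: m) = Γf (L ++ [d]) m := by
        unfold Γf
        rw [sA_cons, sB_cons, cntA_append, cntB_append]
        have h4 : cntA L + ((ud d).1 + sA m) = cntA L + (ud d).1 + sA m := by ring
        have h5 : cntB L + ((ud d).2 + sB m) = cntB L + (ud d).2 + sB m := by ring
        rw [h4, h5]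
      have e4 : wm (ud d :: m) = wm m := by
        rw [wm_cons, bsz_ud]
        simp [Nat.factorial]
      have e5 : qm (ud d :: m) = qm m + 2 := by
        rw [qm_cons, bsz_ud]; ring
      rw [e1, e2, e3, e4, e5, List.length_cons]
      rw [pow_succ]
      ring
    -- claim 2
    have claim2 : ∀ m' ∈ bumps d m, RHSf κ μ A ρ₀ s Λ L m' p
        = D * Sf L.length (qm m + 1) T * (wm m' : ℝ) := by
      intro m' hm'
      obtain ⟨h1, h2, h3, h4, h5⟩ := bumps_stats d m m' hm'
      unfold RHSf
      rw [hD]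
      have e1 : L.length + szm m' = L.length + 1 + szm m := by rw [h2]; ring
      have e2 : cntR L + amd m' = cntR L + dr d + amd m := by rw [h3]; ring
      have e3 : Γf L m' = Γf (L ++ [d]) m := by
        unfold Γf
        rw [h4, h5, cntA_append, cntB_append]
        have h6 : cntA L + (sA m + (ud d).1) = cntA L + (ud d).1 + sA m := by ring
        have h7 : cntB L + (sB m + (ud d).2) = cntB L + (ud d).2 + sB m := by ring
        rw [h6, h7]
      have e5 : qm m' = qm m + 1 := by
        unfold qm
        rw [h1, h2]
        ring
      rw [e1, e2, e3, e5, h1]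
      ring
    -- claim 4
    have claim4 : RHSf κ μ A ρ₀ s Λ (L ++ [d]) m p
        = D * (wm m : ℝ) * Sf (L.length + 1) (qm m) T := by
      unfold RHSf
      rw [hD]
      have e1 : (L ++ [d]).length + szm m = L.length + 1 + szm m := by simp
      have e2 : cntR (L ++ [d]) + amd m = cntR L + dr d + amd m := by
        rw [cntR_append]
      have e3 : (L ++ [d]).length = L.length + 1 := by simp
      rw [e1, e2, e3]
      ring
    -- put it together
    calc |s * DL L (Gf s Λ (ud d :: m)) p
          + ((bumps d m).map fun m' => DL L (Gf s Λ m') p).sum|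
        ≤ |s * DL L (Gf s Λ (ud d :: m)) p|
            + |((bumps d m).map fun m' => DL L (Gf s Λ m') p).sum| := abs_add_le _ _
      _ ≤ |DL L (Gf s Λ (ud d :: m)) p|
            + ((bumps d m).map fun m' => |DL L (Gf s Λ m') p|).sum := by
          apply add_le_add
          · rw [abs_mul]
            nlinarith [abs_nonneg (DL L (Gf s Λ (ud d :: m)) p), abs_nonneg s,
              mul_le_mul_of_nonneg_right hs (abs_nonneg (DL L (Gf s Λ (ud d :: m)) p))]
          · exact abs_list_sum_le _ _
      _ ≤ RHSf κ μ A ρ₀ s Λ L (ud d :: m) p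
            + ((bumps d m).map fun m' => RHSf κ μ A ρ₀ s Λ L m' p).sum := by
          apply add_le_add (ih (ud d :: m) p)
          apply List.sum_le_sum
          intro m' hm'
          exact ih m' p
      _ = D * (wm m : ℝ) * (T * Sf L.length (qm m + 2) T)
            + D * Sf L.length (qm m + 1) T * ((qm m * wm m : ℕ) : ℝ) := by
          rw [claim1]
          congr 1
          have : ((bumps d m).map fun m' => RHSf κ μ A ρ₀ s Λ L m' p)
              = (bumps d m).map fun m' => D * Sf L.length (qm m + 1) T * (wm m' : ℝ) := by
            apply List.map_congr_left
            intro m' hm'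
            exact claim2 m' hm'
          rw [this]
          rw [show ((bumps d m).map fun m' => D * Sf L.length (qm m + 1) T * (wm m' : ℝ))
              = (bumps d m).map fun m' => (D * Sf L.length (qm m + 1) T) * ((fun m'' => ((wm m'' : ℕ):ℝ)) m') from rfl]
          rw [List.sum_map_mul_left, list_cast_sum, bumps_wm_sum]
      _ ≤ RHSf κ μ A ρ₀ s Λ (L ++ [d]) m p := by
          rw [claim4]
          have hrec := Sf_rec L.length (qm m) hT0
          have hwm0 : (0:ℝ) ≤ (wm m : ℝ) := by positivity
          calc D * (wm m : ℝ) * (T * Sf L.length (qm m + 2) T)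
                + D * Sf L.length (qm m + 1) T * ((qm m * wm m : ℕ) : ℝ)
              = D * (wm m : ℝ)
                  * (T * Sf L.length (qm m + 2) T + (qm m : ℝ) * Sf L.length (qm m + 1) T) := by
                push_cast
                ring
            _ ≤ D * (wm m : ℝ) * Sf (L.length + 1) (qm m) T := by
                apply mul_le_mul_of_nonneg_left hrec (by positivity)

end mainest


/-! ### computation of statistics of canonical lists -/

section canonstats

lemma finRange_map_sum {M : Type*} [AddCommMonoid M] (f : Fin n → M) :
    ((List.finRange n).map f).sum = ∑ i, f i := by
  rw [← List.ofFn_eq_map]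
  exact List.sum_ofFn

lemma flat_map_sum {M : Type*} [AddCommMonoid M] (J : List (Fin n)) (f : Fin n → ℕ)
    (tag : Fin n → Dir n) (g : Dir n → M) :
    (((J.flatMap fun i => List.replicate (f i) (tag i)).map g).sum)
      = (J.map fun i => f i • g (tag i)).sum := by
  induction J with
  | nil => simp
  | cons j J ih =>
    rw [List.flatMap_cons, List.map_append, List.sum_append, ih, List.map_cons, List.sum_cons,
      List.map_replicate, List.sum_replicate]

lemma flat_len (J : List (Fin n)) (f : Fin n → ℕ) (tag : Fin n → Dir n) :
    (J.flatMap fun i => List.replicate (f i) (tag i)).length = (J.map f).sum := by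
  induction J with
  | nil => simp
  | cons j J ih => simp [List.flatMap_cons, ih]

lemma canon_length (α β : Fin n → ℕ) : (canon α β).length = mdeg β + mdeg α := by
  rw [canon, List.length_append, Xl, Ξl, flat_len, flat_len, finRange_map_sum, finRange_map_sum]
  rfl

lemma canon_cntR (α β : Fin n → ℕ) : cntR (canon α β) = mdeg α := by
  rw [canon, cntR, List.map_append, List.sum_append, Xl, Ξl, flat_map_sum, flat_map_sum]
  have h1 : ((List.finRange n).map fun i => β i • dr (Sum.inl i : Dir n)).sum = 0 := by
    have : (fun i => β i • dr (Sum.inl i : Dir n)) = fun _ => 0 := by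
      funext i; simp [dr]
    rw [this]
    simp [List.sum_replicate]
  have h2 : ((List.finRange n).map fun i => α i • dr (Sum.inr i : Dir n)).sum = mdeg α := by
    have : (fun i => α i • dr (Sum.inr i : Dir n)) = fun i => α i := by
      funext i; simp [dr]
    rw [this, finRange_map_sum]
    rfl
  rw [h1, h2, Nat.zero_add]

lemma pi_sum_single (α : Fin n → ℕ) : ∑ i, Pi.single (M := fun _ : Fin n => ℕ) i (α i) = α := by
  funext j
  rw [Finset.sum_apply]
  simp [Pi.single_apply]

lemma smul_single_nat (i : Fin n) (k : ℕ) :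
    k • (Pi.single (M := fun _ : Fin n => ℕ) i 1) = Pi.single i k := by
  funext j
  simp [Pi.single_apply, mul_ite]

lemma canon_cntA (α β : Fin n → ℕ) : cntA (canon α β) = α := by
  rw [canon, cntA, List.map_append, List.sum_append, Xl, Ξl, flat_map_sum, flat_map_sum]
  have h1 : ((List.finRange n).map fun i => β i • (ud (Sum.inl i : Dir n)).1).sum = 0 := by
    have : (fun i => β i • (ud (Sum.inl i : Dir n)).1) = fun _ => (0 : Fin n → ℕ) := by
      funext i; simp [ud]
    rw [this]
    simp [List.sum_replicate]
  have h2 : ((List.finRange n).map fun i => α i • (ud (Sum.inr i : Dir n)).1).sum = α := by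
    have : (fun i => α i • (ud (Sum.inr i : Dir n)).1)
        = fun i => Pi.single (M := fun _ : Fin n => ℕ) i (α i) := by
      funext i
      show α i • (Pi.single i 1) = _
      exact smul_single_nat i (α i)
    rw [this, finRange_map_sum, pi_sum_single]
  rw [h1, h2]
  exact zero_add α

lemma canon_cntB (α β : Fin n → ℕ) : cntB (canon α β) = β := by
  rw [canon, cntB, List.map_append, List.sum_append, Xl, Ξl, flat_map_sum, flat_map_sum]
  have h1 : ((List.finRange n).map fun i => β i • (ud (Sum.inl i : Dir n)).2).sum = β := by
    have : (fun i => β i • (ud (Sum.inl i : Dir n)).2)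
        = fun i => Pi.single (M := fun _ : Fin n => ℕ) i (β i) := by
      funext i
      show β i • (Pi.single i 1) = _
      exact smul_single_nat i (β i)
    rw [this, finRange_map_sum, pi_sum_single]
  have h2 : ((List.finRange n).map fun i => α i • (ud (Sum.inr i : Dir n)).2).sum = 0 := by
    have : (fun i => α i • (ud (Sum.inr i : Dir n)).2) = fun _ => (0 : Fin n → ℕ) := by
      funext i; simp [ud]
    rw [this]
    simp [List.sum_replicate]
  rw [h1, h2]
  simp

end canonstats

end S19

/-- **Statement 19**: Gevrey estimates for `e^{±Λ(x,ξ)}`. -/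
theorem exp_pm_Lambda_estimates
    (n : ℕ) (κ μ : ℝ) (hκ : 1 < κ) (hμ : 1 ≤ μ)
    (A : ℝ) (hA : 0 < A)
    (Λ : En n → En n → ℝ)
    (hΛreal_smooth : ContDiff ℝ (⊤ : ℕ∞) fun q : En n × En n => Λ q.1 q.2)
    (ρ₀ : ℝ)
    -- `ρ₀` is the supremum over `(α,β) ∈ ℕ₀^{2n}`, `(x,ξ) ∈ ℝ^{2n}` of
    -- `A^{-|α+β|}(α!β!)^{-μ}⟨ξ⟩^{-1/κ+|α|}|∂_ξ^α ∂_x^β Λ(x,ξ)|`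
    (hρ₀ : IsLUB
      {r : ℝ | ∃ (α β : Fin n → ℕ) (x ξ : En n),
        r = (A ^ (mdeg α + mdeg β))⁻¹ * ((mfact α * mfact β : ℕ) : ℝ) ^ (-μ) *
              jbn ξ ^ (-(1 / κ) + (mdeg α : ℝ)) * |symbD α β Λ x ξ|} ρ₀) :
    ∃ A₁ > 0, ∀ s : ℝ, s = 1 ∨ s = -1 →
      ∀ (α β : Fin n → ℕ) (x ξ : En n),
        |symbD α β (fun x' ξ' => Real.exp (s * Λ x' ξ')) x ξ| ≤
          A₁ ^ (mdeg α + mdeg β) * jbn ξ ^ (-(mdeg α : ℝ)) *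
            ((mfact α * mfact β : ℕ) : ℝ) ^ μ * Real.exp (2 * ρ₀ * jbn ξ ^ (1 / κ)) := by
  classical
  have hlam : ContDiff ℝ ((⊤ : ℕ∞) : WithTop ℕ∞) (S19.lamF Λ) := hΛreal_smooth.of_le (by simp)
  set A₁ : ℝ := 12 * Real.exp 1 * 2 ^ n * A with hA₁def
  have hA₁pos : 0 < A₁ := by
    have := Real.exp_pos 1
    positivity
  refine ⟨A₁, hA₁pos, ?_⟩
  intro s hsor α β x ξ
  have hs' : |s| ≤ 1 := by
    rcases hsor with rfl | rfl <;> simp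
  -- ρ₀ is nonnegative
  have hρnn : 0 ≤ ρ₀ := by
    have hmem : ∃ (α' β' : Fin n → ℕ) (x' ξ' : En n),
        ((A ^ (mdeg (0 : Fin n → ℕ) + mdeg (0 : Fin n → ℕ)))⁻¹
          * ((mfact (0 : Fin n → ℕ) * mfact (0 : Fin n → ℕ) : ℕ) : ℝ) ^ (-μ)
          * jbn (0 : En n) ^ (-(1 / κ) + (mdeg (0 : Fin n → ℕ) : ℝ))
          * |symbD 0 0 Λ 0 0|)
        = (A ^ (mdeg α' + mdeg β'))⁻¹ * ((mfact α' * mfact β' : ℕ) : ℝ) ^ (-μ) *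
            jbn ξ' ^ (-(1 / κ) + (mdeg α' : ℝ)) * |symbD α' β' Λ x' ξ'| :=
      ⟨0, 0, 0, 0, rfl⟩
    have h := hρ₀.1 hmem
    refine le_trans ?_ h
    have h1 : (0:ℝ) ≤ (A ^ (mdeg (0 : Fin n → ℕ) + mdeg (0 : Fin n → ℕ)))⁻¹ :=
      inv_nonneg.mpr (pow_nonneg hA.le _)
    have h2 : (0:ℝ) ≤ ((mfact (0 : Fin n → ℕ) * mfact (0 : Fin n → ℕ) : ℕ) : ℝ) ^ (-μ) :=
      Real.rpow_nonneg (Nat.cast_nonneg _) _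
    have h3 : (0:ℝ) ≤ jbn (0 : En n) ^ (-(1 / κ) + (mdeg (0 : Fin n → ℕ) : ℝ)) :=
      Real.rpow_nonneg (S19.jbn_pos _).le _
    have h4 : (0:ℝ) ≤ |symbD 0 0 Λ 0 0| := abs_nonneg _
    positivity
  -- the block bounds coming from `hρ₀`
  have hbd : ∀ (c : S19.blk n) (p : S19.E2 n), |S19.Bf Λ c p| ≤
      S19.tv κ ρ₀ p * A ^ S19.bsz c * ((S19.Fc c : ℕ) : ℝ) ^ μ
        * jbn p.2 ^ (-(mdeg c.1 : ℝ)) := by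
    intro c p
    have hB : S19.Bf Λ c p = symbD c.1 c.2 Λ p.1 p.2 := (S19.bridge hlam c.1 c.2 p.1 p.2).symm
    rw [hB]
    have hr := hρ₀.1 ⟨c.1, c.2, p.1, p.2, rfl⟩
    set N := mdeg c.1 + mdeg c.2 with hN
    set F := ((mfact c.1 * mfact c.2 : ℕ) : ℝ) with hF
    set a := (mdeg c.1 : ℝ) with ha
    set y := jbn p.2 with hy
    have hypos : (0:ℝ) < y := S19.jbn_pos _
    have hFpos : (0:ℝ) < F := by
      rw [hF]
      exact_mod_cast Nat.mul_pos (Nat.lt_of_lt_of_le Nat.zero_lt_one (S19.one_le_mfact c.1))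
        (Nat.lt_of_lt_of_le Nat.zero_lt_one (S19.one_le_mfact c.2))
    have hPpos : (0:ℝ) < A ^ N := pow_pos hA _
    have hQpos : (0:ℝ) < F ^ μ := Real.rpow_pos_of_pos hFpos _
    have hRpos : (0:ℝ) < y ^ ((1/κ) - a) := Real.rpow_pos_of_pos hypos _
    have key : |symbD c.1 c.2 Λ p.1 p.2|
        = (A ^ N * F ^ μ * y ^ ((1/κ) - a))
          * ((A ^ N)⁻¹ * F ^ (-μ) * y ^ (-(1/κ) + a) * |symbD c.1 c.2 Λ p.1 p.2|) := by
      rw [Real.rpow_neg hFpos.le, show -(1/κ) + a = -((1/κ) - a) by ring,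
        Real.rpow_neg hypos.le]
      field_simp
    have hstep : |symbD c.1 c.2 Λ p.1 p.2|
        ≤ (A ^ N * F ^ μ * y ^ ((1/κ) - a)) * ρ₀ := by
      rw [key]
      exact mul_le_mul_of_nonneg_left hr (by positivity)
    refine hstep.trans (le_of_eq ?_)
    have hysplit : y ^ ((1/κ) - a) = y ^ (1/κ) * y ^ (-a) := by
      rw [show (1/κ) - a = (1/κ) + (-a) by ring, Real.rpow_add hypos]
    rw [hysplit]
    show A ^ N * F ^ μ * (y ^ (1/κ) * y ^ (-a)) * ρ₀
        = ρ₀ * y ^ (1/κ) * A ^ N * F ^ μ * y ^ (-a)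
    ring
  -- the main estimate
  have h0 := S19.main_est hμ hA hρnn hs' hlam hbd (S19.canon α β) [] (x, ξ)
  have hbridge : symbD α β (fun x' ξ' => Real.exp (s * Λ x' ξ')) x ξ
      = S19.DL (S19.canon α β) (S19.Gf s Λ []) (x, ξ) := by
    rw [S19.Gf_nil]
    exact S19.bridge (S19.exp_smooth hlam) α β x ξ
  set Nc := (S19.canon α β).length with hNc
  set F := ((mfact α * mfact β : ℕ) : ℝ) with hF
  set y := jbn ξ with hy
  set T := S19.tv κ ρ₀ (x, ξ) with hT
  have hypos : (0:ℝ) < y := S19.jbn_pos _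
  have hT' : T = ρ₀ * y ^ (1/κ) := rfl
  have hT0 : 0 ≤ T := by
    rw [hT']
    exact mul_nonneg hρnn (Real.rpow_nonneg hypos.le _)
  have hFpos : (0:ℝ) < F := by
    rw [hF]
    exact_mod_cast Nat.mul_pos (Nat.lt_of_lt_of_le Nat.zero_lt_one (S19.one_le_mfact α))
      (Nat.lt_of_lt_of_le Nat.zero_lt_one (S19.one_le_mfact β))
  have hRHS : S19.RHSf κ μ A ρ₀ s Λ (S19.canon α β) [] (x, ξ)
      = Real.exp (s * S19.lamF Λ (x, ξ)) * A ^ Nc * y ^ (-(mdeg α : ℝ))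
        * F ^ (μ - 1) * S19.Sf Nc 0 T := by
    unfold S19.RHSf
    have e1 : S19.szm ([] : List (S19.blk n)) = 0 := by simp [S19.szm]
    have e2 : S19.amd ([] : List (S19.blk n)) = 0 := by simp [S19.amd]
    have e3 : S19.wm ([] : List (S19.blk n)) = 1 := by simp [S19.wm]
    have e4 : S19.qm ([] : List (S19.blk n)) = 0 := by simp [S19.qm, S19.szm]
    have e5 : S19.Γf (S19.canon α β) ([] : List (S19.blk n)) = mfact α * mfact β := by
      unfold S19.Γf
      have : S19.sA ([] : List (S19.blk n)) = 0 := by simp [S19.sA]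
      have h2 : S19.sB ([] : List (S19.blk n)) = 0 := by simp [S19.sB]
      rw [this, h2, add_zero, add_zero, S19.canon_cntA, S19.canon_cntB]
    rw [e1, e2, e3, e4, e5, S19.canon_cntR, Nat.add_zero, Nat.add_zero, List.length_nil,
      pow_zero, Nat.cast_one]
    ring
  rw [hbridge]
  rw [hRHS] at h0
  -- bound the exponential factor
  have hΛbd : |S19.lamF Λ (x, ξ)| ≤ T := by
    have h := hbd ((0 : Fin n → ℕ), (0 : Fin n → ℕ)) (x, ξ)
    have hBf0 : S19.Bf Λ ((0 : Fin n → ℕ), (0 : Fin n → ℕ)) = S19.lamF Λ := by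
      unfold S19.Bf
      rw [S19.canon_zero]
      rfl
    rw [hBf0] at h
    have e1 : S19.bsz ((0 : Fin n → ℕ), (0 : Fin n → ℕ)) = 0 := by
      simp [S19.bsz, S19.mdeg_zero]
    have e2 : S19.Fc ((0 : Fin n → ℕ), (0 : Fin n → ℕ)) = 1 := by
      simp [S19.Fc, S19.mfact_zero]
    rw [e1, e2] at h
    simpa [S19.mdeg_zero, Real.rpow_zero] using h
  have hexple : Real.exp (s * S19.lamF Λ (x, ξ)) ≤ Real.exp T := by
    apply Real.exp_le_exp.mpr
    calc s * S19.lamF Λ (x, ξ) ≤ |s * S19.lamF Λ (x, ξ)| := le_abs_self _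
      _ = |s| * |S19.lamF Λ (x, ξ)| := abs_mul _ _
      _ ≤ 1 * T := mul_le_mul hs' hΛbd (abs_nonneg _) zero_le_one
      _ = T := one_mul T
  have hSfb := S19.Sf_le Nc hT0
  -- numeric estimate
  have hNeq : Nc = mdeg β + mdeg α := S19.canon_length α β
  have hnum : (2:ℝ)^Nc * (3*(Nc:ℝ))^Nc ≤ (12 * Real.exp 1 * 2 ^ n)^Nc * F := by
    have h1 : ((Nc:ℝ))^Nc ≤ Real.exp Nc * (Nc.factorial : ℝ) := S19.pow_le_exp_fact Nc
    have h2 : Real.exp (Nc : ℝ) = (Real.exp 1)^Nc := by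
      rw [← Real.exp_nat_mul, mul_one]
    have h3 : (Nc.factorial : ℝ) ≤ 2^Nc * (((mdeg β).factorial * (mdeg α).factorial : ℕ) : ℝ) := by
      rw [hNeq]
      exact_mod_cast S19.add_factorial_le (mdeg β) (mdeg α)
    have h4 : ((mdeg β).factorial * (mdeg α).factorial : ℕ)
        ≤ (2^n)^(mdeg β) * mfact β * ((2^n)^(mdeg α) * mfact α) :=
      Nat.mul_le_mul (S19.fact_mdeg_le_mfact β) (S19.fact_mdeg_le_mfact α)
    have h5 : ((2:ℕ)^n)^(mdeg β) * mfact β * (((2:ℕ)^n)^(mdeg α) * mfact α)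
        = ((2:ℕ)^n)^Nc * (mfact α * mfact β) := by
      rw [hNeq, pow_add]
      ring
    have h6 : (Nc.factorial : ℝ) ≤ 2^Nc * (((2:ℝ)^n)^Nc * F) := by
      refine h3.trans ?_
      apply mul_le_mul_of_nonneg_left _ (by positivity)
      have := h4.trans (le_of_eq h5)
      rw [hF]
      exact_mod_cast this
    calc (2:ℝ)^Nc * (3*(Nc:ℝ))^Nc = 2^Nc * (3^Nc * ((Nc:ℝ))^Nc) := by
          rw [mul_pow]
      _ ≤ 2^Nc * (3^Nc * (Real.exp Nc * (Nc.factorial : ℝ))) := by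
          apply mul_le_mul_of_nonneg_left _ (by positivity)
          apply mul_le_mul_of_nonneg_left h1 (by positivity)
      _ ≤ 2^Nc * (3^Nc * (Real.exp Nc * (2^Nc * (((2:ℝ)^n)^Nc * F)))) := by
          apply mul_le_mul_of_nonneg_left _ (by positivity)
          apply mul_le_mul_of_nonneg_left _ (by positivity)
          apply mul_le_mul_of_nonneg_left h6 (Real.exp_pos _).le
      _ = (2 * (3 * (Real.exp 1 * (2 * 2^n))))^Nc * F := by
          rw [h2, mul_pow, mul_pow, mul_pow, mul_pow]
          ring
      _ = (12 * Real.exp 1 * 2 ^ n)^Nc * F := by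
          congr 2
          ring
  -- final assembly
  have hexpnn : (0:ℝ) ≤ Real.exp (s * S19.lamF Λ (x, ξ)) := (Real.exp_pos _).le
  have hXnn : (0:ℝ) ≤ A ^ Nc * y ^ (-(mdeg α : ℝ)) * F ^ (μ - 1) :=
    mul_nonneg (mul_nonneg (pow_nonneg hA.le _) (Real.rpow_nonneg hypos.le _))
      (Real.rpow_nonneg hFpos.le _)
  have hc1 : Real.exp (s * S19.lamF Λ (x, ξ)) * A ^ Nc * y ^ (-(mdeg α : ℝ)) * F ^ (μ - 1)
      ≤ Real.exp T * A ^ Nc * y ^ (-(mdeg α : ℝ)) * F ^ (μ - 1) := by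
    apply mul_le_mul_of_nonneg_right _ (Real.rpow_nonneg hFpos.le _)
    apply mul_le_mul_of_nonneg_right _ (Real.rpow_nonneg hypos.le _)
    exact mul_le_mul_of_nonneg_right hexple (pow_nonneg hA.le _)
  have hc2 : S19.Sf Nc 0 T ≤ (12 * Real.exp 1 * 2 ^ n)^Nc * F * Real.exp T :=
    hSfb.trans (mul_le_mul_of_nonneg_right hnum (Real.exp_pos _).le)
  have hSfnn : 0 ≤ S19.Sf Nc 0 T := S19.Sf_nonneg Nc 0 hT0
  calc |S19.DL (S19.canon α β) (S19.Gf s Λ []) (x, ξ)|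
      ≤ Real.exp (s * S19.lamF Λ (x, ξ)) * A ^ Nc * y ^ (-(mdeg α : ℝ)) * F ^ (μ - 1)
          * S19.Sf Nc 0 T := h0
    _ ≤ (Real.exp T * A ^ Nc * y ^ (-(mdeg α : ℝ)) * F ^ (μ - 1))
          * ((12 * Real.exp 1 * 2 ^ n)^Nc * F * Real.exp T) := by
        apply mul_le_mul hc1 hc2 hSfnn
        have : (0:ℝ) ≤ Real.exp T := (Real.exp_pos _).le
        have h7 := hXnn
        nlinarith [mul_nonneg (mul_nonneg ((Real.exp_pos T).le) (pow_nonneg hA.le Nc))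
          (Real.rpow_nonneg hypos.le (-(mdeg α : ℝ))), Real.rpow_nonneg hFpos.le (μ - 1)]
    _ = A₁ ^ Nc * y ^ (-(mdeg α : ℝ)) * (F ^ (μ - 1) * F) * (Real.exp T * Real.exp T) := by
        rw [hA₁def, mul_pow]
        ring
    _ = A₁ ^ (mdeg α + mdeg β) * jbn ξ ^ (-(mdeg α : ℝ)) * ((mfact α * mfact β : ℕ) : ℝ) ^ μ
          * Real.exp (2 * ρ₀ * jbn ξ ^ (1 / κ)) := by
        have hFμ : F ^ (μ - 1) * F = F ^ μ := by
          have h := Real.rpow_add hFpos (μ - 1) 1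
          rw [Real.rpow_one, show μ - 1 + 1 = μ by ring] at h
          rw [h]
        have hexp2 : Real.exp T * Real.exp T = Real.exp (2 * ρ₀ * jbn ξ ^ (1 / κ)) := by
          rw [← Real.exp_add]
          congr 1
          rw [hT']
          ring
        have hNc' : Nc = mdeg α + mdeg β := by rw [hNeq]; ring
        rw [hFμ, hexp2, hNc', hF, hy]


end
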